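/- The Metropolis-Hastings combination matrix with weights a_{ℓk} = σ_k² / max{n_k σ_k², n_ℓ σ_ℓ²} for ℓ ∈ N_k, ℓ ≠ k (and diagonal completing each column to sum 1) has Perron vector p with entries p_k = σ_k^{-2} / (Σ_ℓ σ_ℓ^{-2}), i.e., A p = p. -/

import Mathlib

/-! The Metropolis–Hastings weights factor as `a_{ℓk} = s_{ℓk} σ_k²` with `s` symmetric, so
`p_k ∝ σ_k⁻²` satisfies detailed balance `a_{kℓ} p_ℓ = a_{ℓk} p_k`. Summing over `ℓ` and using
that every column of `A` sums to `1` gives `(A p)_k = p_k`. -/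

open Finset

namespace Matrix

variable {n R : Type*}

/-- Columns are the source: `A l k` is the weight from `k` to `l`. -/
def IsDetailedBalance [Mul R] (A : Matrix n n R) (p : n → R) : Prop :=
  ∀ k l, A k l * p l = A l k * p k

theorem IsDetailedBalance.mulVec_eq_self [Fintype n] [CommSemiring R] {A : Matrix n n R}
    {p : n → R} (hA : A.IsDetailedBalance p) (hcol : ∀ k, ∑ l, A l k = 1) : A *ᵥ p = p := by
  funext k
  calc ∑ l, A k l * p l = ∑ l, A l k * p k := sum_congr rfl fun l _ => hA k l
    _ = p k := by rw [← sum_mul, hcol k, one_mul]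

theorem isDetailedBalance_of_offDiag_eq_mul [Field R] {A : Matrix n n R} {s : n → n → R}
    {q : n → R} (c : R) (hs : ∀ k l, s k l = s l k) (hq : ∀ k, q k ≠ 0)
    (hA : ∀ k l, l ≠ k → A l k = s l k * q k) :
    A.IsDetailedBalance fun k => (q k)⁻¹ / c := by
  intro k l
  rcases eq_or_ne l k with rfl | hlk
  · rfl
  rw [hA l k hlk.symm, hA k l hlk, hs k l]
  field_simp [hq k, hq l]

theorem sum_col_eq_one_of_support_subset [Fintype n] [AddCommGroup R] [One R] [DecidableEq n]
    {A : Matrix n n R} {N : n → Finset n} (hself : ∀ k, k ∈ N k)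
    (hzero : ∀ k l, l ∉ N k → A l k = 0) (hdiag : ∀ k, A k k = 1 - ∑ m ∈ (N k).erase k, A m k)
    (k : n) : ∑ l, A l k = 1 := by
  rw [← sum_subset (subset_univ (N k)) fun l _ hl => hzero k l hl,
    ← add_sum_erase (N k) (fun m => A m k) (hself k), hdiag k, sub_add_cancel]

end Matrix

/-- the Metropolis-Hastings combination matrix on an undirected graph
has Perron vector `p_k = σ_k⁻² / ∑ σ_ℓ⁻²`, i.e. `A p = p`. -/
theorem metropolis_hastings_perron_vector
    (K : ℕ) (N : Fin K → Finset (Fin K)) (hself : ∀ k, k ∈ N k)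
    (hundir : ∀ k l, l ∈ N k ↔ k ∈ N l)
    (σ2 : Fin K → ℝ) (hσ : ∀ k, 0 < σ2 k)
    (A : Matrix (Fin K) (Fin K) ℝ)
    (hoff : ∀ k l, l ≠ k →
      A l k = if l ∈ N k then
        σ2 k / max (((N k).card : ℝ) * σ2 k) (((N l).card : ℝ) * σ2 l) else 0)
    (hdiag : ∀ k, A k k = 1 - ∑ m ∈ (N k).erase k, A m k) :
    let p : Fin K → ℝ := fun k => (σ2 k)⁻¹ / ∑ l, (σ2 l)⁻¹
    A.mulVec p = p := by
  intro p
  let s : Fin K → Fin K → ℝ := fun l k =>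
    if l ∈ N k then (max (((N k).card : ℝ) * σ2 k) (((N l).card : ℝ) * σ2 l))⁻¹ else 0
  have hs : ∀ k l, s k l = s l k := fun k l => by
    simp only [s, hundir k l, max_comm]
  have hfactor : ∀ k l, l ≠ k → A l k = s l k * σ2 k := fun k l hlk => by
    by_cases hl : l ∈ N k <;> simp only [hoff k l hlk, s, hl, if_true, if_false, div_eq_inv_mul,
      zero_mul]
  have hcol := Matrix.sum_col_eq_one_of_support_subset hself
    (fun k l hl => by rw [hoff k l (ne_of_mem_of_not_mem (hself k) hl).symm, if_neg hl]) hdiag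
  exact (Matrix.isDetailedBalance_of_offDiag_eq_mul _ hs (fun k => (hσ k).ne') hfactor
    ).mulVec_eq_self hcol
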